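/- Let D be a finite nonempty set of time series and let M assign to each T ∈ D a finite set of nodes M(T). Let C = {C_1, ..., C_k} be a partition of D into k ≥ 2 nonempty clusters. Define the representativity |N|_{C_i} = |{T ∈ C_i : N ∈ M(T)}| / |C_i| and, for a node N crossed by at least one time series, the exclusivity Pr_{C_i}(N) = |{T ∈ C_i : N ∈ M(T)}| / |{T ∈ D : N ∈ M(T)}|. Suppose that for every cluster C_i the set {N crossed : Pr_{C_i}(N) ≥ 1} (the λ=1 graphoid) coincides with the set {N : |N|_{C_i} ≥ 1/|C_i|} (the γ=1/|C_i| graphoid). Then the graphoids G_{C_i} = {N : ∃ T ∈ C_i, N ∈ M(T)} are pairwise disjoint; in particular their intersection over all clusters is empty. -/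
import Mathlib


/-- The exclusivity `Pr_{C_i}(N)` of a node `N` for a cluster `Ci`. -/
noncomputable def exclusivity {τ ν : Type*} [DecidableEq ν]
    (D : Finset τ) (M : τ → Finset ν) (Ci : Finset τ) (N : ν) : ℝ :=
  ((Ci.filter fun T => N ∈ M T).card : ℝ) /
    ((D.filter fun T => N ∈ M T).card : ℝ)

/-- The representativity `|N|_{C_i}` of a node `N` for a cluster `Ci`. -/
noncomputable def representativity {τ ν : Type*} [DecidableEq ν]
    (M : τ → Finset ν) (Ci : Finset τ) (N : ν) : ℝ :=
  ((Ci.filter fun T => N ∈ M T).card : ℝ) / (Ci.card : ℝ)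

/-- Lemma 2 of the paper: if for every cluster the `λ = 1` graphoid coincides
with the `γ = 1/|C_i|` graphoid, then the graphoids are pairwise disjoint; in
particular their intersection over all clusters is empty. -/
theorem graphoids_disjoint_of_lambda_eq_gamma {τ ν : Type*} [DecidableEq ν]
    (D : Finset τ) (hD : D.Nonempty) (M : τ → Finset ν)
    (k : ℕ) (hk : 2 ≤ k) (C : Fin k → Finset τ)
    (hsub : ∀ i, C i ⊆ D)
    (hne : ∀ i, (C i).Nonempty)
    (hdisj : ∀ i j, i ≠ j → Disjoint (C i) (C j))
    (hcover : ∀ T ∈ D, ∃ i, T ∈ C i)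
    (hyp : ∀ i : Fin k,
      {N : ν | (D.filter fun T => N ∈ M T).Nonempty ∧
          1 ≤ exclusivity D M (C i) N}
        = {N : ν | 1 / ((C i).card : ℝ) ≤ representativity M (C i) N}) :
    (∀ i j : Fin k, i ≠ j →
      {N : ν | ∃ T ∈ C i, N ∈ M T} ∩ {N : ν | ∃ T ∈ C j, N ∈ M T} = ∅) ∧
    (⋂ i : Fin k, {N : ν | ∃ T ∈ C i, N ∈ M T}) = ∅ := by
  classical
  have key : ∀ j : Fin k, ∀ N : ν, (∃ T ∈ C j, N ∈ M T) →
      ∀ T ∈ D, N ∈ M T → T ∈ C j := by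
    intro j N hN T hTD hNT
    obtain ⟨T0, hT0, hNT0⟩ := hN
    have hCjpos : (0:ℝ) < ((C j).card : ℝ) := by
      exact_mod_cast Finset.card_pos.mpr (hne j)
    have h1 : 1 ≤ (((C j).filter fun T => N ∈ M T).card : ℝ) := by
      have : 0 < ((C j).filter fun T => N ∈ M T).card :=
        Finset.card_pos.mpr ⟨T0, Finset.mem_filter.mpr ⟨hT0, hNT0⟩⟩
      exact_mod_cast this
    have hmem : N ∈ {N : ν | 1 / ((C j).card : ℝ) ≤ representativity M (C j) N} := by
      simp only [Set.mem_setOf_eq, representativity]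
      exact (div_le_div_iff_of_pos_right hCjpos).mpr h1
    rw [← hyp j] at hmem
    obtain ⟨hDne, hexcl⟩ := hmem
    have hDpos : (0:ℝ) < ((D.filter fun T => N ∈ M T).card : ℝ) := by
      exact_mod_cast Finset.card_pos.mpr hDne
    have hle : ((D.filter fun T => N ∈ M T).card : ℝ) ≤
        (((C j).filter fun T => N ∈ M T).card : ℝ) := by
      have := (one_le_div hDpos).mp hexcl
      simpa [exclusivity] using this
    have hsubf : ((C j).filter fun T => N ∈ M T) ⊆ (D.filter fun T => N ∈ M T) :=
      Finset.filter_subset_filter _ (hsub j)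
    have heq : ((C j).filter fun T => N ∈ M T) = (D.filter fun T => N ∈ M T) :=
      Finset.eq_of_subset_of_card_le hsubf (by exact_mod_cast hle)
    have : T ∈ (C j).filter fun T => N ∈ M T := by
      rw [heq]; exact Finset.mem_filter.mpr ⟨hTD, hNT⟩
    exact (Finset.mem_filter.mp this).1
  have main : ∀ i j : Fin k, i ≠ j →
      {N : ν | ∃ T ∈ C i, N ∈ M T} ∩ {N : ν | ∃ T ∈ C j, N ∈ M T} = ∅ := by
    intro i j hij
    ext N
    simp only [Set.mem_inter_iff, Set.mem_setOf_eq, Set.mem_empty_iff_false, iff_false,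
      not_and]
    rintro ⟨T, hTi, hNT⟩ hNj
    have hTD : T ∈ D := hsub i hTi
    have hTj : T ∈ C j := key j N hNj T hTD hNT
    exact Finset.disjoint_left.mp (hdisj i j hij) hTi hTj
  refine ⟨main, ?_⟩
  have h01 : (⟨0, by omega⟩ : Fin k) ≠ ⟨1, by omega⟩ := by
    simp [Fin.ext_iff]
  have := main ⟨0, by omega⟩ ⟨1, by omega⟩ h01
  apply Set.eq_empty_of_subset_empty
  rw [← this]
  intro N hN
  simp only [Set.mem_iInter] at hN
  exact ⟨hN _, hN _⟩
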